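/- Let G be a unit-disk graph embedded in the plane with clique number ω. For each vertex v and each r ∈ [0,1], d(v) + (1 − r)·d_r(v) ≤ 6ω, where d(v) is the degree of v and d_r(v) is the number of neighbors of v at Euclidean distance at most r from v. In particular, d_{1/2}(v) ≤ 12ω − 2d(v). -/

import Mathlib

open Real intervalIntegral

section helpers

lemma sin_lin_aux {c : ℝ} (h0 : 0 ≤ c) (h1 : c ≤ 1) : c / 2 ≤ Real.sin (π * c / 6) := by
  have hconc := strictConcaveOn_sin_Icc.concaveOn
  have h0m : (0:ℝ) ∈ Set.Icc (0:ℝ) π := ⟨le_rfl, pi_pos.le⟩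
  have h6m : (π/6 : ℝ) ∈ Set.Icc (0:ℝ) π := ⟨by positivity, by linarith [pi_pos]⟩
  have key := hconc.2 h0m h6m (by linarith : (0:ℝ) ≤ 1 - c) h0 (by ring)
  simp only [smul_eq_mul, Real.sin_zero, mul_zero, zero_add, Real.sin_pi_div_six] at key
  have h2 : c * (π/6) = π * c / 6 := by ring
  rw [h2] at key
  linarith

lemma cos_angle_lemma {x y β₁ β₂ : ℝ} (hb1 : 0 ≤ β₁) (hb1' : β₁ ≤ π/2)
    (hb2 : 0 ≤ β₂) (hb2' : β₂ ≤ π/2)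
    (hx : Real.cos β₁ ≤ Real.cos x) (hy : Real.cos β₂ ≤ Real.cos y) :
    Real.cos (β₁ + β₂) ≤ Real.cos (x - y) := by
  have hpi := Real.pi_pos
  have hc1 : (0:ℝ) ≤ Real.cos β₁ := Real.cos_nonneg_of_mem_Icc ⟨by linarith, hb1'⟩
  have hc2 : (0:ℝ) ≤ Real.cos β₂ := Real.cos_nonneg_of_mem_Icc ⟨by linarith, hb2'⟩
  have hs1 : Real.sin β₁ = Real.sqrt (1 - Real.cos β₁ ^ 2) := by
    rw [← Real.sin_sq β₁]
    exact (Real.sqrt_sq (Real.sin_nonneg_of_nonneg_of_le_pi hb1 (by linarith))).symm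
  have hs2 : Real.sin β₂ = Real.sqrt (1 - Real.cos β₂ ^ 2) := by
    rw [← Real.sin_sq β₂]
    exact (Real.sqrt_sq (Real.sin_nonneg_of_nonneg_of_le_pi hb2 (by linarith))).symm
  have hax : |Real.sin x| = Real.sqrt (1 - Real.cos x ^ 2) := by
    rw [← Real.sin_sq x, Real.sqrt_sq_eq_abs]
  have hay : |Real.sin y| = Real.sqrt (1 - Real.cos y ^ 2) := by
    rw [← Real.sin_sq y, Real.sqrt_sq_eq_abs]
  have hxle : Real.cos x ≤ 1 := Real.cos_le_one x
  have hyle : Real.cos y ≤ 1 := Real.cos_le_one y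
  have hm1 : Real.sqrt (1 - Real.cos x ^ 2) ≤ Real.sqrt (1 - Real.cos β₁ ^ 2) := by
    apply Real.sqrt_le_sqrt; nlinarith
  have hm2 : Real.sqrt (1 - Real.cos y ^ 2) ≤ Real.sqrt (1 - Real.cos β₂ ^ 2) := by
    apply Real.sqrt_le_sqrt; nlinarith
  have hprod : Real.sqrt (1 - Real.cos x ^ 2) * Real.sqrt (1 - Real.cos y ^ 2)
      ≤ Real.sqrt (1 - Real.cos β₁ ^ 2) * Real.sqrt (1 - Real.cos β₂ ^ 2) :=
    mul_le_mul hm1 hm2 (Real.sqrt_nonneg _) (Real.sqrt_nonneg _)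
  have hsinabs : -(|Real.sin x| * |Real.sin y|) ≤ Real.sin x * Real.sin y := by
    rw [← abs_mul]; exact neg_abs_le _
  have hcc : Real.cos β₁ * Real.cos β₂ ≤ Real.cos x * Real.cos y :=
    mul_le_mul hx hy hc2 (le_trans hc1 hx)
  rw [Real.cos_sub, Real.cos_add]
  rw [hs1, hs2]
  rw [hax, hay] at hsinabs
  linarith

lemma geom_lemma {a b : ℝ} (ha0 : 0 ≤ a) (ha1 : a ≤ 1) (hb0 : 0 ≤ b) (hb1 : b ≤ 1) :
    a^2 + b^2 - 2*a*b*Real.cos (π/6*(4-a-b)) ≤ 1 := by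
  have hid : Real.cos (π/6*(4-a-b)) = Real.sin (π * (a+b-1) / 6) := by
    rw [← Real.cos_pi_div_two_sub]; ring_nf
  rw [hid]
  rcases le_or_gt (a + b) 1 with h | h
  · have hs : -1 ≤ Real.sin (π * (a+b-1) / 6) := Real.neg_one_le_sin _
    have hab : 0 ≤ a * b := mul_nonneg ha0 hb0
    have h2 : -(2*a*b*Real.sin (π * (a+b-1) / 6)) ≤ 2*(a*b) := by nlinarith
    nlinarith [sq_nonneg (a+b)]
  · have hc0 : 0 ≤ a + b - 1 := by linarith
    have hc1 : a + b - 1 ≤ 1 := by linarith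
    have := sin_lin_aux hc0 hc1
    nlinarith [mul_nonneg ha0 hb0, mul_nonneg (mul_nonneg (by linarith : (0:ℝ) ≤ 1-a)
      (by linarith : (0:ℝ) ≤ 1-b)) (by linarith : (0:ℝ) ≤ 1+a+b)]

lemma normSq_aux (a b θ φ : ℝ) :
    Complex.normSq ((a:ℂ) * Complex.exp (θ * Complex.I) - (b:ℂ) * Complex.exp (φ * Complex.I))
      = a^2 + b^2 - 2*a*b*Real.cos (θ - φ) := by
  simp only [Complex.exp_mul_I, Complex.normSq_apply, Complex.sub_re, Complex.sub_im,
    Complex.mul_re, Complex.mul_im, Complex.add_re, Complex.add_im, Complex.ofReal_re,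
    Complex.ofReal_im, Complex.I_re, Complex.I_im, Complex.ofReal_cos, Complex.ofReal_sin,
    Complex.cos_ofReal_re, Complex.sin_ofReal_re, Complex.cos_ofReal_im, Complex.sin_ofReal_im]
  rw [Real.cos_sub]
  nlinarith [Real.sin_sq_add_cos_sq θ, Real.sin_sq_add_cos_sq φ]

lemma dist_sq_formula (v u w : ℂ) :
    dist u w ^ 2 = dist u v ^ 2 + dist w v ^ 2
      - 2 * dist u v * dist w v * Real.cos (Complex.arg (u - v) - Complex.arg (w - v)) := by
  set a := ‖u - v‖ with ha
  set b := ‖w - v‖ with hb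
  set θ := Complex.arg (u - v) with hθ
  set φ := Complex.arg (w - v) with hφ
  have h1 : u - v = (a : ℂ) * Complex.exp (θ * Complex.I) :=
    (Complex.norm_mul_exp_arg_mul_I (u - v)).symm
  have h2 : w - v = (b : ℂ) * Complex.exp (φ * Complex.I) :=
    (Complex.norm_mul_exp_arg_mul_I (w - v)).symm
  have huw : u - w = (u - v) - (w - v) := by ring
  have hd : dist u w ^ 2 = Complex.normSq (u - w) := by
    rw [Complex.dist_eq, Complex.sq_norm]
  have hda : dist u v = a := Complex.dist_eq u v
  have hdb : dist w v = b := Complex.dist_eq w v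
  rw [hda, hdb, hd, huw, h1, h2, normSq_aux]

lemma ind_measurable (θ β : ℝ) :
    Measurable (fun t : ℝ => if Real.cos β ≤ Real.cos (θ - t) then (1:ℝ) else 0) := by
  apply Measurable.ite _ measurable_const measurable_const
  exact measurableSet_le measurable_const
    ((Real.continuous_cos.comp (continuous_const.sub continuous_id)).measurable)

lemma ind_intervalIntegrable (θ β a b : ℝ) :
    IntervalIntegrable (fun t : ℝ => if Real.cos β ≤ Real.cos (θ - t) then (1:ℝ) else 0)
      MeasureTheory.volume a b := by
  apply IntervalIntegrable.mono_fun' (g := fun _ => (1:ℝ)) intervalIntegrable_const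
    (ind_measurable θ β).aestronglyMeasurable
  filter_upwards with t
  simp only [Real.norm_eq_abs]
  split <;> simp

lemma arc_integral_lower (θ β : ℝ) (hβ0 : 0 ≤ β) (hβπ : β ≤ π) :
    2 * β ≤ ∫ t in (0:ℝ)..(2*π),
      (if Real.cos β ≤ Real.cos (θ - t) then (1:ℝ) else 0) := by
  set f : ℝ → ℝ := fun t => if Real.cos β ≤ Real.cos (θ - t) then (1:ℝ) else 0 with hf
  have hper : Function.Periodic f (2*π) := by
    intro t
    have h : θ - (t + 2*π) = (θ - t) - 2*π := by ring
    simp only [hf, h, Real.cos_sub_two_pi]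
  have hshift := hper.intervalIntegral_add_eq 0 (θ - π)
  rw [zero_add] at hshift
  rw [hshift]
  have hint : ∀ x y : ℝ, IntervalIntegrable f MeasureTheory.volume x y :=
    fun x y => ind_intervalIntegrable θ β x y
  have h1 : θ - π ≤ θ - β := by linarith
  have h2 : θ - β ≤ θ + β := by linarith
  have h3 : θ + β ≤ θ - π + 2*π := by linarith
  have split1 : ∫ t in (θ-π)..(θ-π+2*π), f t
      = (∫ t in (θ-π)..(θ-β), f t) + ∫ t in (θ-β)..(θ-π+2*π), f t :=
    (integral_add_adjacent_intervals (hint _ _) (hint _ _)).symm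
  have split2 : ∫ t in (θ-β)..(θ-π+2*π), f t
      = (∫ t in (θ-β)..(θ+β), f t) + ∫ t in (θ+β)..(θ-π+2*π), f t :=
    (integral_add_adjacent_intervals (hint _ _) (hint _ _)).symm
  have hmid : ∫ t in (θ-β)..(θ+β), f t = 2 * β := by
    rw [integral_congr (g := fun _ => (1:ℝ))]
    · rw [integral_const]
      simp only [smul_eq_mul, mul_one]
      ring
    · intro t ht
      rw [Set.uIcc_of_le h2] at ht
      have habs : |θ - t| ≤ β := by
        rw [abs_le]; constructor <;> [linarith [ht.2]; linarith [ht.1]]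
      have hcle : Real.cos β ≤ Real.cos (θ - t) := by
        rw [← Real.cos_abs (θ - t)]
        exact Real.cos_le_cos_of_nonneg_of_le_pi (abs_nonneg _) hβπ habs
      simp only [hf, if_pos hcle]
  have hnn : ∀ t : ℝ, 0 ≤ f t := by
    intro t; simp only [hf]; split <;> norm_num
  have hside1 : 0 ≤ ∫ t in (θ-π)..(θ-β), f t :=
    integral_nonneg h1 (fun u _ => hnn u)
  have hside2 : 0 ≤ ∫ t in (θ+β)..(θ-π+2*π), f t :=
    integral_nonneg h3 (fun u _ => hnn u)
  linarith [split1, split2, hmid]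

end helpers

/-- `IsCliqueNum V ω` : ω is the clique number of the unit-disk graph on the
finite point set `V ⊆ ℂ`. -/
def IsCliqueNum (V : Finset ℂ) (ω : ℕ) : Prop :=
  IsGreatest {n : ℕ | ∃ S : Finset ℂ, S ⊆ V ∧
    (S : Set ℂ).Pairwise (fun u w => dist u w ≤ 1) ∧ S.card = n} ω

lemma key_sum (V : Finset ℂ) (ω : ℕ) (hω : IsCliqueNum V ω) (v : ℂ) (hv : v ∈ V) :
    ∑ u ∈ V.filter (fun u => u ≠ v ∧ dist u v ≤ 1), (2 - dist u v) ≤ 6 * (ω : ℝ) := by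
  classical
  have hpi := Real.pi_pos
  set N := V.filter (fun u => u ≠ v ∧ dist u v ≤ 1) with hN
  set β : ℂ → ℝ := fun u => π/6 * (2 - dist u v) with hβ
  set θ : ℂ → ℝ := fun u => Complex.arg (u - v) with hθ
  set ind : ℂ → ℝ → ℝ :=
    fun u t => if Real.cos (β u) ≤ Real.cos (θ u - t) then (1:ℝ) else 0 with hind
  -- bounds on distances and β for members of N
  have hmemN : ∀ u ∈ N, u ≠ v ∧ 0 ≤ dist u v ∧ dist u v ≤ 1 := by
    intro u hu
    rw [hN, Finset.mem_filter] at hu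
    exact ⟨hu.2.1, dist_nonneg, hu.2.2⟩
  have hβb : ∀ u ∈ N, π/6 ≤ β u ∧ β u ≤ π/3 := by
    intro u hu
    obtain ⟨-, h0, h1⟩ := hmemN u hu
    constructor
    · rw [hβ]; nlinarith
    · rw [hβ]; nlinarith
  -- Step A : pointwise clique bound
  have stepA : ∀ t : ℝ, (∑ u ∈ N, ind u t) + 1 ≤ (ω : ℝ) := by
    intro t
    set T := N.filter (fun u => Real.cos (β u) ≤ Real.cos (θ u - t)) with hT
    have hsum : (∑ u ∈ N, ind u t) = (T.card : ℝ) := by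
      rw [hT, hind]
      simp [Finset.sum_boole]
    have hvT : v ∉ T := by
      intro hvt
      rw [hT, Finset.mem_filter, hN, Finset.mem_filter] at hvt
      exact hvt.1.2.1 rfl
    have hTsub : T ⊆ N := Finset.filter_subset _ _
    -- the clique
    have hclique : (T.card + 1 : ℕ) ∈ {n : ℕ | ∃ S : Finset ℂ, S ⊆ V ∧
        (S : Set ℂ).Pairwise (fun u w => dist u w ≤ 1) ∧ S.card = n} := by
      refine ⟨insert v T, ?_, ?_, ?_⟩
      · intro x hx
        rcases Finset.mem_insert.1 hx with h | h
        · rwa [h]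
        · exact Finset.mem_of_mem_filter x (hTsub h)
      · intro x hx y hy hxy
        simp only [Finset.coe_insert, Set.mem_insert_iff, Finset.mem_coe] at hx hy
        have hdistT : ∀ z ∈ T, dist z v ≤ 1 := fun z hz => (hmemN z (hTsub hz)).2.2
        have hgeom : ∀ p q, p ∈ T → q ∈ T → dist p q ≤ 1 := by
          intro p q hp hq
          obtain ⟨-, hp0, hp1⟩ := hmemN p (hTsub hp)
          obtain ⟨-, hq0, hq1⟩ := hmemN q (hTsub hq)
          obtain ⟨hpl, hpu⟩ := hβb p (hTsub hp)
          obtain ⟨hql, hqu⟩ := hβb q (hTsub hq)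
          rw [hT, Finset.mem_filter] at hp hq
          have hcosb := cos_angle_lemma (x := θ p - t) (y := θ q - t)
            (by linarith : 0 ≤ β p) (by linarith : β p ≤ π/2)
            (by linarith : 0 ≤ β q) (by linarith : β q ≤ π/2) hp.2 hq.2
          have harg : (θ p - t) - (θ q - t) = θ p - θ q := by ring
          rw [harg] at hcosb
          have hform := dist_sq_formula v p q
          have hβsum : β p + β q = π/6 * (4 - dist p v - dist q v) := by
            rw [hβ]; ring
          have hgeo := geom_lemma hp0 hp1 hq0 hq1
          rw [← hβsum] at hgeo
          have habn : 0 ≤ 2 * dist p v * dist q v := by positivity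
          have hsq : dist p q ^ 2 ≤ 1 := by
            rw [hθ] at hcosb
            nlinarith [hcosb, hform, hgeo]
          nlinarith [dist_nonneg (x := p) (y := q)]
        rcases hx with rfl | hx
        · rcases hy with rfl | hy
          · exact absurd rfl hxy
          · rw [dist_comm]; exact hdistT y hy
        · rcases hy with rfl | hy
          · exact hdistT x hx
          · exact hgeom x y hx hy
      · rw [Finset.card_insert_of_notMem hvT]
    have hcard : T.card + 1 ≤ ω := hω.2 hclique
    rw [hsum]
    have := (Nat.cast_le (α := ℝ)).2 hcard
    push_cast at this
    linarith
  -- Step B : integrate over [0, 2π]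
  have hintu : ∀ u ∈ N, IntervalIntegrable (ind u) MeasureTheory.volume 0 (2*π) :=
    fun u _ => ind_intervalIntegrable (θ u) (β u) 0 (2*π)
  have harc : ∀ u ∈ N, 2 * β u ≤ ∫ t in (0:ℝ)..(2*π), ind u t := by
    intro u hu
    obtain ⟨hl, hr⟩ := hβb u hu
    exact arc_integral_lower (θ u) (β u) (by linarith) (by linarith)
  have hswap : ∫ t in (0:ℝ)..(2*π), (∑ u ∈ N, ind u t)
      = ∑ u ∈ N, ∫ t in (0:ℝ)..(2*π), ind u t :=
    integral_finset_sum hintu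
  have hintsum : IntervalIntegrable (fun t => ∑ u ∈ N, ind u t)
      MeasureTheory.volume 0 (2*π) := by
    have heq : (fun t => ∑ u ∈ N, ind u t) = ∑ u ∈ N, ind u := by
      funext t; simp
    rw [heq]
    exact IntervalIntegrable.sum N hintu
  have hmono : ∫ t in (0:ℝ)..(2*π), (∑ u ∈ N, ind u t)
      ≤ ∫ t in (0:ℝ)..(2*π), ((ω : ℝ) - 1) := by
    apply integral_mono_on (by linarith) hintsum intervalIntegrable_const
    intro x _
    linarith [stepA x]
  have hconst : ∫ t in (0:ℝ)..(2*π), ((ω : ℝ) - 1) = 2*π*((ω:ℝ) - 1) := by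
    rw [integral_const]; simp
  have hsum2 : ∑ u ∈ N, 2 * β u ≤ 2*π*((ω:ℝ) - 1) := by
    calc ∑ u ∈ N, 2 * β u ≤ ∑ u ∈ N, ∫ t in (0:ℝ)..(2*π), ind u t :=
          Finset.sum_le_sum harc
      _ = ∫ t in (0:ℝ)..(2*π), (∑ u ∈ N, ind u t) := hswap.symm
      _ ≤ ∫ t in (0:ℝ)..(2*π), ((ω : ℝ) - 1) := hmono
      _ = 2*π*((ω:ℝ) - 1) := hconst
  have hsum3 : π/3 * ∑ u ∈ N, (2 - dist u v) ≤ 2*π*((ω:ℝ) - 1) := by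
    rw [Finset.mul_sum]
    calc ∑ u ∈ N, π/3 * (2 - dist u v) = ∑ u ∈ N, 2 * β u := by
          apply Finset.sum_congr rfl; intro u _; rw [hβ]; ring
      _ ≤ 2*π*((ω:ℝ) - 1) := hsum2
  nlinarith [hsum3, hpi]

/-- `d(v) + (1 − r)·d_r(v) ≤ 6ω`, and in particular
`d_{1/2}(v) ≤ 12ω − 2d(v)`. -/
theorem degree_inner_degree_bound (V : Finset ℂ) (ω : ℕ) (hω : IsCliqueNum V ω)
    (v : ℂ) (hv : v ∈ V) :
    (∀ r : ℝ, 0 ≤ r → r ≤ 1 →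
      ((V.filter (fun u => u ≠ v ∧ dist u v ≤ 1)).card : ℝ)
        + (1 - r) * ((V.filter (fun u => u ≠ v ∧ dist u v ≤ r)).card : ℝ)
        ≤ 6 * (ω : ℝ)) ∧
    ((V.filter (fun u => u ≠ v ∧ dist u v ≤ 1/2)).card : ℝ)
      ≤ 12 * (ω : ℝ) - 2 * ((V.filter (fun u => u ≠ v ∧ dist u v ≤ 1)).card : ℝ) := by
  classical
  have key := key_sum V ω hω v hv
  have main : ∀ r : ℝ, 0 ≤ r → r ≤ 1 →
      ((V.filter (fun u => u ≠ v ∧ dist u v ≤ 1)).card : ℝ)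
        + (1 - r) * ((V.filter (fun u => u ≠ v ∧ dist u v ≤ r)).card : ℝ)
        ≤ 6 * (ω : ℝ) := by
    intro r hr0 hr1
    set N := V.filter (fun u => u ≠ v ∧ dist u v ≤ 1) with hN
    have hfe : V.filter (fun u => u ≠ v ∧ dist u v ≤ r)
        = N.filter (fun u => dist u v ≤ r) := by
      rw [hN, Finset.filter_filter]
      apply Finset.filter_congr
      intro u _
      constructor
      · rintro ⟨h1, h2⟩; exact ⟨⟨h1, le_trans h2 hr1⟩, h2⟩
      · rintro ⟨⟨h1, -⟩, h2⟩; exact ⟨h1, h2⟩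
    have hcard1 : ((N.card : ℝ)) = ∑ u ∈ N, (1:ℝ) := by simp
    have hcard2 : ((V.filter (fun u => u ≠ v ∧ dist u v ≤ r)).card : ℝ)
        = ∑ u ∈ N, (if dist u v ≤ r then (1:ℝ) else 0) := by
      rw [hfe]; simp [Finset.sum_boole]
    rw [hcard1, hcard2, Finset.mul_sum, ← Finset.sum_add_distrib]
    refine le_trans (Finset.sum_le_sum ?_) key
    intro u hu
    rw [hN, Finset.mem_filter] at hu
    obtain ⟨-, -, hd1⟩ := hu
    split
    · next h => linarith
    · next h => linarith
  refine ⟨main, ?_⟩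
  have h2 := main (1/2) (by norm_num) (by norm_num)
  linarith
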